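/- Let K be a symmetric bilinear map on R^3_1 with values in R^3_1 such that ⟨K(X,Y),Z⟩ is totally symmetric and trace(K_X) = 0 for all X. Suppose K is invariant under the rotation A_t = [[1,0,0],[0,cos t,-sin t],[0,sin t,cos t]] (with respect to an ONB {t,v,w}, t timelike) for some t ∈ (0,2π) with t ∉ {2π/3, π, 4π/3}. Then there is a real number a_4 such that K(t,t) = -2a_4 t, K(t,v) = a_4 v, K(t,w) = a_4 w, K(v,v) = -a_4 t, K(v,w) = 0 relative components, i.e., all cubic form coefficients vanish except a_1 = 2a_4 and a_4. -/

import Mathlib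

open Matrix Real

/-- ONB inner product of `ℝ³₁` (first coordinate timelike). -/
def ip (x y : Fin 3 → ℝ) : ℝ := -(x 0 * y 0) + x 1 * y 1 + x 2 * y 2

/-- The standard (orthonormal) basis `{t,v,w}`. -/
def bas : Fin 3 → Fin 3 → ℝ := ![![1, 0, 0], ![0, 1, 0], ![0, 0, 1]]

/-- The rotation `A_θ` fixing the timelike direction. -/
noncomputable def Arot (θ : ℝ) : Matrix (Fin 3) (Fin 3) ℝ :=
  !![1, 0, 0; 0, Real.cos θ, -Real.sin θ; 0, Real.sin θ, Real.cos θ]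

/-! Over `ℂ`, `A_θ` fixes `t` and has the eigenvector `e = v - i w` with eigenvalue `e^{iθ}`.
Hence the complexified cubic form `C(X,Y,Z) = ⟨K(X,Y),Z⟩` satisfies
`C(t,t,e) = e^{iθ} C(t,t,e)`, `C(t,e,e) = e^{2iθ} C(t,e,e)` and `C(e,e,e) = e^{3iθ} C(e,e,e)`.
The excluded angles are exactly those with `e^{kiθ} = 1` for some `k ≤ 3`, so these three
numbers vanish; together with tracelessness this leaves only
`C(t,t,t) = 2 C(t,v,v) = 2 C(t,w,w)`. -/

open Complex

lemma ip_add_left (x y z : Fin 3 → ℝ) : ip (x + y) z = ip x z + ip y z := by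
  simp only [ip, Pi.add_apply]; ring

lemma ip_add_right (x y z : Fin 3 → ℝ) : ip x (y + z) = ip x y + ip x z := by
  simp only [ip, Pi.add_apply]; ring

lemma ip_smul_left (a : ℝ) (x y : Fin 3 → ℝ) : ip (a • x) y = a * ip x y := by
  simp only [ip, Pi.smul_apply, smul_eq_mul]; ring

lemma ip_smul_right (a : ℝ) (x y : Fin 3 → ℝ) : ip x (a • y) = a * ip x y := by
  simp only [ip, Pi.smul_apply, smul_eq_mul]; ring

lemma eq_vec_ip_bas (x : Fin 3 → ℝ) : x = ![-ip x (bas 0), ip x (bas 1), ip x (bas 2)] := by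
  ext i; fin_cases i <;> simp [ip, bas]

lemma Arot_mulVec_bas_zero (θ : ℝ) : (Arot θ).mulVec (bas 0) = bas 0 := by
  ext i; fin_cases i <;> simp [Arot, bas, Matrix.mulVec, dotProduct, Fin.sum_univ_three]

lemma Arot_mulVec_bas_one (θ : ℝ) :
    (Arot θ).mulVec (bas 1) = Real.cos θ • bas 1 + Real.sin θ • bas 2 := by
  ext i; fin_cases i <;> simp [Arot, bas, Matrix.mulVec, dotProduct, Fin.sum_univ_three]

lemma Arot_mulVec_bas_two (θ : ℝ) :
    (Arot θ).mulVec (bas 2) = (-Real.sin θ) • bas 1 + Real.cos θ • bas 2 := by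
  ext i; fin_cases i <;> simp [Arot, bas, Matrix.mulVec, dotProduct, Fin.sum_univ_three]

lemma exp_mul_I_pow_ne_one {θ : ℝ} (hθ : θ ∈ Set.Ioo 0 (2 * π)) (h1 : θ ≠ 2 * π / 3)
    (h2 : θ ≠ π) (h3 : θ ≠ 4 * π / 3) {n : ℕ} (hn : n ∈ Finset.Icc 1 3) :
    cexp (θ * I) ^ n ≠ 1 := by
  obtain ⟨hθ0, hθ2⟩ := hθ
  obtain ⟨hn1, hn3⟩ := Finset.mem_Icc.mp hn
  rw [Ne, ← Complex.exp_nat_mul, Complex.exp_eq_one_iff]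
  rintro ⟨m, hm⟩
  have hnm : n * θ = 2 * π * m := by
    have : ((n * θ : ℝ) : ℂ) * I = ((2 * π * m : ℝ) : ℂ) * I := by
      push_cast
      linear_combination hm
    exact_mod_cast mul_right_cancel₀ I_ne_zero this
  have hπ := pi_pos
  have hn1' : (1 : ℝ) ≤ n := by exact_mod_cast hn1
  have hm0 : 0 < m := by
    have : (0 : ℝ) < m := by nlinarith
    exact_mod_cast this
  have hmn : m < n := by
    have : (m : ℝ) < n := by nlinarith
    exact_mod_cast this
  interval_cases n <;> interval_cases m <;> norm_num at hnm
  · exact h2 (by linarith)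
  · exact h1 (by linarith)
  · exact h3 (by linarith)

section CubicForm

variable (K : (Fin 3 → ℝ) →ₗ[ℝ] (Fin 3 → ℝ) →ₗ[ℝ] (Fin 3 → ℝ))

def cubicForm (i j k : Fin 3) : ℝ := ip (K (bas i) (bas j)) (bas k)

-- `C(t,t,e)`, `C(t,e,e)` and `C(e,e,e)` for `e = v - i w`, written out in real coordinates.
def weightOne : ℂ := ⟨cubicForm K 0 0 1, -cubicForm K 0 0 2⟩

def weightTwo : ℂ := ⟨cubicForm K 0 1 1 - cubicForm K 0 2 2, -2 * cubicForm K 0 1 2⟩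

def weightThree : ℂ :=
  ⟨cubicForm K 1 1 1 - 3 * cubicForm K 1 2 2, cubicForm K 2 2 2 - 3 * cubicForm K 1 1 2⟩

def ArotInvariant (θ : ℝ) : Prop :=
  ∀ X Y Z, ip (K ((Arot θ).mulVec X) ((Arot θ).mulVec Y)) ((Arot θ).mulVec Z) = ip (K X Y) Z

variable {K}

lemma ip_apply_bas (i j k : Fin 3) : ip (K (bas i) (bas j)) (bas k) = cubicForm K i j k := rfl

-- Permutation lemmas: `simp` uses them only to sort the three indices.
lemma cubicForm_comm_left (hsymm : ∀ X Y, K X Y = K Y X) (i j k : Fin 3) :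
    cubicForm K j i k = cubicForm K i j k := by
  rw [cubicForm, hsymm, cubicForm]

lemma cubicForm_comm_right (htot : ∀ X Y Z, ip (K X Y) Z = ip (K X Z) Y) (i j k : Fin 3) :
    cubicForm K i k j = cubicForm K i j k := htot _ _ _

lemma exp_mul_weightOne {θ : ℝ} (hinv : ArotInvariant K θ) :
    cexp (θ * I) * weightOne K = weightOne K := by
  have e1 := hinv (bas 0) (bas 0) (bas 1)
  have e2 := hinv (bas 0) (bas 0) (bas 2)
  simp only [Arot_mulVec_bas_zero, Arot_mulVec_bas_one, Arot_mulVec_bas_two, ip_add_right,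
    ip_smul_right, ip_apply_bas] at e1 e2
  rw [exp_mul_I, ← ofReal_cos, ← ofReal_sin]
  apply Complex.ext <;> simp only [weightOne, mul_re, mul_im, add_re, add_im, ofReal_re,
    ofReal_im, I_re, I_im]
  · linear_combination e1
  · linear_combination -e2

lemma exp_mul_weightTwo (htot : ∀ X Y Z, ip (K X Y) Z = ip (K X Z) Y) {θ : ℝ}
    (hinv : ArotInvariant K θ) : cexp (θ * I) ^ 2 * weightTwo K = weightTwo K := by
  have e11 := hinv (bas 0) (bas 1) (bas 1)
  have e12 := hinv (bas 0) (bas 1) (bas 2)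
  have e22 := hinv (bas 0) (bas 2) (bas 2)
  simp only [Arot_mulVec_bas_zero, Arot_mulVec_bas_one, Arot_mulVec_bas_two, map_add, map_smul,
    ip_add_left, ip_add_right, ip_smul_left, ip_smul_right, ip_apply_bas,
    cubicForm_comm_right htot] at e11 e12 e22
  rw [exp_mul_I, ← ofReal_cos, ← ofReal_sin]
  apply Complex.ext <;> simp only [weightTwo, pow_two, mul_re, mul_im, add_re, add_im, ofReal_re,
    ofReal_im, I_re, I_im]
  · linear_combination e11 - e22
  · linear_combination -2 * e12

lemma exp_mul_weightThree (hsymm : ∀ X Y, K X Y = K Y X)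
    (htot : ∀ X Y Z, ip (K X Y) Z = ip (K X Z) Y) {θ : ℝ} (hinv : ArotInvariant K θ) :
    cexp (θ * I) ^ 3 * weightThree K = weightThree K := by
  have e111 := hinv (bas 1) (bas 1) (bas 1)
  have e112 := hinv (bas 1) (bas 1) (bas 2)
  have e122 := hinv (bas 1) (bas 2) (bas 2)
  have e222 := hinv (bas 2) (bas 2) (bas 2)
  simp only [Arot_mulVec_bas_one, Arot_mulVec_bas_two, map_add, map_smul, LinearMap.add_apply,
    LinearMap.smul_apply, ip_add_left, ip_add_right, ip_smul_left, ip_smul_right, ip_apply_bas,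
    cubicForm_comm_left hsymm, cubicForm_comm_right htot] at e111 e112 e122 e222
  rw [exp_mul_I, ← ofReal_cos, ← ofReal_sin]
  apply Complex.ext <;> simp only [weightThree, pow_succ, pow_zero, one_mul, mul_re, mul_im,
    add_re, add_im, ofReal_re, ofReal_im, I_re, I_im]
  · linear_combination e111 - 3 * e122
  · linear_combination e222 - 3 * e112

lemma apply_bas_eq_cubicForm (i j : Fin 3) :
    K (bas i) (bas j) = ![-cubicForm K i j 0, cubicForm K i j 1, cubicForm K i j 2] :=
  eq_vec_ip_bas _

lemma cubicForm_trace (htr : ∀ X, ∑ i, K X (bas i) i = 0) (i : Fin 3) :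
    cubicForm K i 0 0 = cubicForm K i 1 1 + cubicForm K i 2 2 := by
  have h := htr (bas i)
  simp only [Fin.sum_univ_three, apply_bas_eq_cubicForm, cons_val_zero, cons_val_one, cons_val] at h
  linarith

theorem exists_of_weights_eq_zero (hsymm : ∀ X Y, K X Y = K Y X)
    (htot : ∀ X Y Z, ip (K X Y) Z = ip (K X Z) Y) (htr : ∀ X, ∑ i, K X (bas i) i = 0)
    (h₁ : weightOne K = 0) (h₂ : weightTwo K = 0) (h₃ : weightThree K = 0) :
    ∃ a₄ : ℝ,
      K (bas 0) (bas 0) = (-2 * a₄) • bas 0 ∧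
      K (bas 0) (bas 1) = a₄ • bas 1 ∧
      K (bas 0) (bas 2) = a₄ • bas 2 ∧
      K (bas 1) (bas 1) = (-a₄) • bas 0 ∧
      K (bas 1) (bas 2) = 0 ∧
      K (bas 2) (bas 2) = (-a₄) • bas 0 := by
  have h001 : cubicForm K 0 0 1 = 0 := congrArg re h₁
  have h002 : cubicForm K 0 0 2 = 0 := neg_eq_zero.mp (congrArg im h₁)
  have h022 : cubicForm K 0 2 2 = cubicForm K 0 1 1 := (sub_eq_zero.mp (congrArg re h₂)).symm
  have h012 : cubicForm K 0 1 2 = 0 := by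
    have h : -2 * cubicForm K 0 1 2 = 0 := congrArg im h₂
    linarith
  have h111 : cubicForm K 1 1 1 = 3 * cubicForm K 1 2 2 := sub_eq_zero.mp (congrArg re h₃)
  have h222 : cubicForm K 2 2 2 = 3 * cubicForm K 1 1 2 := sub_eq_zero.mp (congrArg im h₃)
  have h000 : cubicForm K 0 0 0 = 2 * cubicForm K 0 1 1 := by
    linarith [cubicForm_trace htr 0]
  have h122 : cubicForm K 1 2 2 = 0 := by
    have := cubicForm_trace htr 1
    simp only [cubicForm_comm_left hsymm, cubicForm_comm_right htot] at this
    linarith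
  have h112 : cubicForm K 1 1 2 = 0 := by
    have := cubicForm_trace htr 2
    simp only [cubicForm_comm_left hsymm, cubicForm_comm_right htot] at this
    linarith
  refine ⟨cubicForm K 0 1 1, ?_, ?_, ?_, ?_, ?_, ?_⟩ <;> rw [apply_bas_eq_cubicForm] <;>
    ext i <;> fin_cases i <;>
    simp [bas, cubicForm_comm_left hsymm, cubicForm_comm_right htot, h000, h001, h002, h012, h022,
      h112, h122, h111, h222]

end CubicForm

theorem stmt5 (K : (Fin 3 → ℝ) →ₗ[ℝ] (Fin 3 → ℝ) →ₗ[ℝ] (Fin 3 → ℝ))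
    (hsymm : ∀ X Y, K X Y = K Y X)
    (htot : ∀ X Y Z, ip (K X Y) Z = ip (K X Z) Y)
    (htr : ∀ X, ∑ i, K X (bas i) i = 0)
    (θ : ℝ) (hθ : θ ∈ Set.Ioo 0 (2 * Real.pi))
    (h1 : θ ≠ 2 * Real.pi / 3) (h2 : θ ≠ Real.pi) (h3 : θ ≠ 4 * Real.pi / 3)
    (hinv : ∀ X Y Z, ip (K ((Arot θ).mulVec X) ((Arot θ).mulVec Y))
      ((Arot θ).mulVec Z) = ip (K X Y) Z) :
    ∃ a₄ : ℝ,
      K (bas 0) (bas 0) = (-2 * a₄) • bas 0 ∧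
      K (bas 0) (bas 1) = a₄ • bas 1 ∧
      K (bas 0) (bas 2) = a₄ • bas 2 ∧
      K (bas 1) (bas 1) = (-a₄) • bas 0 ∧
      K (bas 1) (bas 2) = 0 ∧
      K (bas 2) (bas 2) = (-a₄) • bas 0 := by
  have eq_zero {n : ℕ} {z : ℂ} (hn : n ∈ Finset.Icc 1 3) (hz : cexp (θ * I) ^ n * z = z) :
      z = 0 :=
    (mul_left_eq_self₀.mp hz).resolve_left (exp_mul_I_pow_ne_one hθ h1 h2 h3 hn)
  exact exists_of_weights_eq_zero hsymm htot htr
    (eq_zero (n := 1) (by decide) (by simpa using exp_mul_weightOne hinv))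
    (eq_zero (by decide) (exp_mul_weightTwo htot hinv))
    (eq_zero (by decide) (exp_mul_weightThree hsymm htot hinv))
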